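/- arXiv:1710.02020 — 4 statements merged into one kernel-verified Lean document; each statement's English description precedes it below -/
import Mathlib

section
/- Let T be a positive bounded operator on a complex Hilbert space H and let g ∈ H be a unit vector. Then for every real p with 0 < p ≤ 1, ⟨T^p g, g⟩ ≤ ⟨Tg, g⟩^p. -/
/-!
Concavity of `x ↦ x ^ p` gives the tangent-line bound `x ^ p ≤ p s ^ (p - 1) x + (1 - p) s ^ p`
for every `s > 0`. The continuous functional calculus lifts it to the operator inequality
`T ^ p ≤ p s ^ (p - 1) T + (1 - p) s ^ p`, and pairing with the unit vector `g` gives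
`⟪T ^ p g, g⟫ ≤ p s ^ (p - 1) ⟪T g, g⟫ + (1 - p) s ^ p`. Taking `s = ⟪T g, g⟫` gives the claim,
or letting `s → 0⁺` when `⟪T g, g⟫ = 0`.
-/

open scoped InnerProductSpace Topology

open Filter

theorem Real.rpow_le_tangent {x s q : ℝ} (hx : 0 ≤ x) (hs : 0 < s) (hq0 : 0 ≤ q) (hq1 : q ≤ 1) :
    x ^ q ≤ q * s ^ (q - 1) * x + (1 - q) * s ^ q := by
  have amgm : x ^ q * s ^ (1 - q) ≤ q * x + (1 - q) * s :=
    Real.geom_mean_le_arith_mean2_weighted hq0 (sub_nonneg.2 hq1) hx hs.le (by ring)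
  have hcancel : s ^ (1 - q) * s ^ (q - 1) = 1 := by rw [← Real.rpow_add hs]; simp
  have hpow : s * s ^ (q - 1) = s ^ q := by
    rw [Real.rpow_sub_one hs.ne']; field_simp
  calc x ^ q = x ^ q * s ^ (1 - q) * s ^ (q - 1) := by rw [mul_assoc, hcancel, mul_one]
    _ ≤ (q * x + (1 - q) * s) * s ^ (q - 1) := by gcongr
    _ = q * s ^ (q - 1) * x + (1 - q) * s ^ q := by rw [← hpow]; ring

section

variable {A : Type*} [PartialOrder A] [Ring A] [StarRing A] [TopologicalSpace A]
  [StarOrderedRing A] [Algebra ℝ A] [ContinuousFunctionalCalculus ℝ A IsSelfAdjoint]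
  [NonnegSpectrumClass ℝ A] [IsSemitopologicalRing A] [T2Space A]

theorem CFC.rpow_le_tangent {a : A} (ha : 0 ≤ a) {s q : ℝ} (hs : 0 < s) (hq0 : 0 ≤ q)
    (hq1 : q ≤ 1) :
    a ^ q ≤ (q * s ^ (q - 1)) • a + algebraMap ℝ A ((1 - q) * s ^ q) := by
  have hsa : IsSelfAdjoint a := .of_nonneg ha
  have htangent : cfc (fun x : ℝ => q * s ^ (q - 1) * x + (1 - q) * s ^ q) a
      = (q * s ^ (q - 1)) • a + algebraMap ℝ A ((1 - q) * s ^ q) := by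
    rw [cfc_add .., cfc_const_mul_id .., cfc_const ..]
  rw [CFC.rpow_eq_cfc_real ha, ← htangent]
  exact cfc_mono fun x hx => Real.rpow_le_tangent (spectrum_nonneg_of_nonneg ha hx) hs hq0 hq1

end

namespace ContinuousLinearMap

theorem re_inner_apply_le_of_le {𝕜 E : Type*} [RCLike 𝕜] [NormedAddCommGroup E]
    [InnerProductSpace 𝕜 E] {A B : E →L[𝕜] E} (h : A ≤ B) (x : E) :
    RCLike.re ⟪A x, x⟫_𝕜 ≤ RCLike.re ⟪B x, x⟫_𝕜 := by
  simpa [inner_sub_left] using ((le_def A B).1 h).re_inner_nonneg_left x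

variable {H : Type*} [NormedAddCommGroup H] [InnerProductSpace ℂ H]

theorem re_inner_smul_add_algebraMap_apply (T : H →L[ℂ] H) (c r : ℝ) (x : H) :
    (⟪(c • T + algebraMap ℝ (H →L[ℂ] H) r) x, x⟫_ℂ).re = c * (⟪T x, x⟫_ℂ).re + r * ‖x‖ ^ 2 := by
  simp [Algebra.algebraMap_eq_smul_one, ← Complex.ofReal_pow]

theorem re_inner_rpow_apply_le_tangent [CompleteSpace H] {T : H →L[ℂ] H} (hT : 0 ≤ T) {g : H}
    (hg : ‖g‖ = 1) {s q : ℝ} (hs : 0 < s) (hq0 : 0 ≤ q) (hq1 : q ≤ 1) :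
    (⟪(T ^ q) g, g⟫_ℂ).re ≤ q * s ^ (q - 1) * (⟪T g, g⟫_ℂ).re + (1 - q) * s ^ q :=
  calc (⟪(T ^ q) g, g⟫_ℂ).re
      ≤ (⟪((q * s ^ (q - 1)) • T + algebraMap ℝ (H →L[ℂ] H) ((1 - q) * s ^ q)) g, g⟫_ℂ).re :=
        re_inner_apply_le_of_le (CFC.rpow_le_tangent hT hs hq0 hq1) g
    _ = q * s ^ (q - 1) * (⟪T g, g⟫_ℂ).re + (1 - q) * s ^ q := by
        rw [re_inner_smul_add_algebraMap_apply, hg, one_pow, mul_one]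

end ContinuousLinearMap

/-- For a positive bounded operator `T` on a complex Hilbert space, a unit vector `g`,
and a real `0 < p ≤ 1`, one has `⟨T^p g, g⟩ ≤ ⟨Tg, g⟩ ^ p`, where `T ^ p` is given by the
continuous functional calculus (`CFC.rpow`). -/
theorem inner_rpow_apply_le_inner_pow
    {H : Type*} [NormedAddCommGroup H] [InnerProductSpace ℂ H] [CompleteSpace H]
    (T : H →L[ℂ] H) (hT : 0 ≤ T) (g : H) (hg : ‖g‖ = 1) (p : ℝ)
    (hp0 : 0 < p) (hp1 : p ≤ 1) :
    (⟪(CFC.rpow T p) g, g⟫_ℂ).re ≤ (⟪T g, g⟫_ℂ).re ^ p := by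
  have ha : 0 ≤ (⟪T g, g⟫_ℂ).re :=
    ((ContinuousLinearMap.nonneg_iff_isPositive T).1 hT).re_inner_nonneg_left g
  have bound (s : ℝ) (hs : 0 < s) :
      (⟪(T ^ p) g, g⟫_ℂ).re ≤ p * s ^ (p - 1) * (⟪T g, g⟫_ℂ).re + (1 - p) * s ^ p :=
    ContinuousLinearMap.re_inner_rpow_apply_le_tangent hT hg hs hp0.le hp1
  rw [CFC.rpow_eq_pow]
  generalize (⟪T g, g⟫_ℂ).re = a at ha bound ⊢
  obtain rfl | ha := ha.eq_or_lt
  · have hlim : Tendsto (fun s : ℝ => (1 - p) * s ^ p) (𝓝[>] 0) (𝓝 0) := by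
      refine tendsto_nhdsWithin_of_tendsto_nhds ?_
      simpa [Real.zero_rpow hp0.ne'] using
        ((Real.continuous_rpow_const hp0.le).const_mul (1 - p)).tendsto 0
    rw [Real.zero_rpow hp0.ne']
    exact ge_of_tendsto hlim (eventually_nhdsWithin_of_forall fun s hs => by simpa using bound s hs)
  · have htangent : p * a ^ (p - 1) * a + (1 - p) * a ^ p = a ^ p := by
      rw [Real.rpow_sub_one ha.ne']; field_simp; ring
    exact htangent ▸ bound a ha
end

section
/- Let T be a compact positive operator on a separable complex Hilbert space H, with spectral decomposition Tf = Σ_j λ_j ⟨f, e_j⟩ e_j where {e_j} is orthonormal and λ_j ↓ 0. If 0 < p < 1 and {f_k} is an orthonormal basis of H with Σ_k ⟨T f_k, f_k⟩^p < ∞, then Σ_j λ_j^p < ∞, i.e. T belongs to the Schatten class S_p. -/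
/-!
Let `A j k = |⟪e j, f k⟫|²`. Its rows sum to `1` (Parseval in the basis `f`), its columns sum to
at most `1` (Bessel for `e`), and `⟪T f k, f k⟫ = ∑ j, λ j * A j k`. As `t ↦ t ^ p` is concave for
`p ≤ 1`, Jensen's inequality with the weights `A · k` gives `∑ j, λ j ^ p * A j k ≤ ⟪T f k, f k⟫ ^ p`;
summing over `k` and exchanging the order of summation yields
`∑ j, λ j ^ p ≤ ∑ k, ⟪T f k, f k⟫ ^ p`. In `ℝ≥0∞` the exchange needs no summability assumptions.
-/

open scoped InnerProductSpace ENNReal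

namespace ENNReal
variable {ι κ : Type*} {p : ℝ}

theorem tsum_rpow_mul_le_rpow_tsum_mul_rpow_tsum {f g : ι → ℝ≥0∞} {q : ℝ} (hp : 0 ≤ p)
    (hq : 0 ≤ q) (hpq : p + q = 1) :
    ∑' j, f j ^ p * g j ^ q ≤ (∑' j, f j) ^ p * (∑' j, g j) ^ q := by
  let _ : MeasurableSpace ι := ⊤
  simpa only [MeasureTheory.lintegral_count] using
    lintegral_mul_norm_pow_le (μ := MeasureTheory.Measure.count) (f := f) (g := g)
      measurable_from_top.aemeasurable measurable_from_top.aemeasurable hp hq hpq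

theorem rpow_mul_mul_rpow_one_sub (x : ℝ≥0∞) {a : ℝ≥0∞} (ha : a ≠ ∞) (hp0 : 0 ≤ p) :
    (x * a) ^ p * a ^ (1 - p) = x ^ p * a := by
  rcases eq_or_ne a 0 with rfl | ha0
  · rcases hp0.eq_or_lt with rfl | hp
    · simp
    · simp [zero_rpow_of_pos hp]
  rw [mul_rpow_of_nonneg _ _ hp0, mul_assoc, ← rpow_add _ _ ha0 ha, add_sub_cancel, rpow_one]

theorem tsum_rpow_mul_le_rpow_tsum_mul {x a : ι → ℝ≥0∞} (hp0 : 0 ≤ p) (hp1 : p ≤ 1)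
    (ha : ∑' j, a j ≤ 1) : ∑' j, x j ^ p * a j ≤ (∑' j, x j * a j) ^ p :=
  calc ∑' j, x j ^ p * a j = ∑' j, (x j * a j) ^ p * a j ^ (1 - p) := by
        have ha_ne_top j : a j ≠ ∞ := ((ENNReal.le_tsum j).trans ha).trans_lt one_lt_top |>.ne
        simp only [rpow_mul_mul_rpow_one_sub _ (ha_ne_top _) hp0]
    _ ≤ (∑' j, x j * a j) ^ p * (∑' j, a j) ^ (1 - p) :=
        tsum_rpow_mul_le_rpow_tsum_mul_rpow_tsum hp0 (by linarith) (by ring)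
    _ ≤ (∑' j, x j * a j) ^ p := by
        grw [ha, one_rpow, mul_one]
        linarith

theorem tsum_rpow_le_tsum_rpow_tsum_mul {x : ι → ℝ≥0∞} {A : ι → κ → ℝ≥0∞} (hp0 : 0 ≤ p)
    (hp1 : p ≤ 1) (hrow : ∀ j, ∑' k, A j k = 1) (hcol : ∀ k, ∑' j, A j k ≤ 1) :
    ∑' j, x j ^ p ≤ ∑' k, (∑' j, x j * A j k) ^ p :=
  calc ∑' j, x j ^ p = ∑' j, ∑' k, x j ^ p * A j k := by
        simp only [ENNReal.tsum_mul_left, hrow, mul_one]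
    _ = ∑' k, ∑' j, x j ^ p * A j k := ENNReal.tsum_comm
    _ ≤ ∑' k, (∑' j, x j * A j k) ^ p :=
        ENNReal.tsum_le_tsum fun k => tsum_rpow_mul_le_rpow_tsum_mul hp0 hp1 (hcol k)

theorem tsum_ofReal_eq_of_hasSum {g : ι → ℝ} {a : ℝ} (hg : ∀ i, 0 ≤ g i) (h : HasSum g a) :
    ∑' i, ENNReal.ofReal (g i) = ENNReal.ofReal a := by
  rw [← ofReal_tsum_of_nonneg hg h.summable, h.tsum_eq]

theorem ofReal_norm_sq {F : Type*} [SeminormedAddGroup F] (z : F) :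
    ENNReal.ofReal (‖z‖ ^ 2) = ‖z‖ₑ ^ 2 := by
  rw [ofReal_pow (norm_nonneg z), ofReal_norm]

end ENNReal

section
variable {𝕜 E ι : Type*} [RCLike 𝕜] [NormedAddCommGroup E] [InnerProductSpace 𝕜 E]

theorem inner_mul_inner_swap (x y : E) : ⟪x, y⟫_𝕜 * ⟪y, x⟫_𝕜 = ((‖⟪x, y⟫_𝕜‖ ^ 2 : ℝ) : 𝕜) := by
  rw [← inner_conj_symm y x, RCLike.mul_conj, RCLike.ofReal_pow]

theorem HilbertBasis.tsum_enorm_inner_sq (b : HilbertBasis ι 𝕜 E) (x : E) :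
    ∑' i, ‖⟪x, b i⟫_𝕜‖ₑ ^ 2 = ‖x‖ₑ ^ 2 := by
  have h := RCLike.hasSum_re 𝕜 (b.hasSum_inner_mul_inner x x)
  simp only [inner_mul_inner_swap, inner_self_eq_norm_sq_to_K, ← RCLike.ofReal_pow,
    RCLike.ofReal_re] at h
  simp only [← ENNReal.ofReal_norm_sq]
  exact ENNReal.tsum_ofReal_eq_of_hasSum (fun _ => sq_nonneg _) h

theorem Orthonormal.tsum_enorm_inner_sq_le {e : ι → E} (he : Orthonormal 𝕜 e) (x : E) :
    ∑' i, ‖⟪e i, x⟫_𝕜‖ₑ ^ 2 ≤ ‖x‖ₑ ^ 2 := by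
  simp only [← ENNReal.ofReal_norm_sq]
  rw [← ENNReal.ofReal_tsum_of_nonneg (fun _ => sq_nonneg _) (he.inner_products_summable x)]
  exact ENNReal.ofReal_le_ofReal (he.tsum_inner_products_le x)

theorem Orthonormal.summable_smul_inner_smul [CompleteSpace E] {e : ι → E} (he : Orthonormal 𝕜 e)
    {c : ι → 𝕜} {C : ℝ} (hc : ∀ i, ‖c i‖ ≤ C) (x : E) :
    Summable fun i => c i • ⟪e i, x⟫_𝕜 • e i := by
  have hsq : Summable fun i => ‖c i * ⟪e i, x⟫_𝕜‖ ^ 2 := by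
    refine .of_nonneg_of_le (fun _ => sq_nonneg _) (fun i => ?_)
      ((he.inner_products_summable x).mul_left (C ^ 2))
    rw [norm_mul, mul_pow]
    gcongr
    exact hc i
  simpa [smul_smul] using (he.orthogonalFamily.summable_iff_norm_sq_summable _).2 hsq

theorem Orthonormal.tsum_ofReal_mul_enorm_inner_sq [CompleteSpace E] {e : ι → E}
    (he : Orthonormal 𝕜 e) {c : ι → ℝ} {C : ℝ} (hc0 : ∀ i, 0 ≤ c i) (hcC : ∀ i, c i ≤ C)
    (x : E) :
    ∑' i, ENNReal.ofReal (c i) * ‖⟪e i, x⟫_𝕜‖ₑ ^ 2 =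
      ENNReal.ofReal (RCLike.re ⟪∑' i, (c i : 𝕜) • ⟪e i, x⟫_𝕜 • e i, x⟫_𝕜) := by
  have hc i : ‖(c i : 𝕜)‖ ≤ C := by rw [RCLike.norm_ofReal, abs_of_nonneg (hc0 i)]; exact hcC i
  have h := RCLike.hasSum_re 𝕜 ((he.summable_smul_inner_smul hc x).hasSum.mapL (innerSL 𝕜 x))
  rw [innerSL_apply_apply, ← inner_conj_symm, RCLike.conj_re] at h
  simp only [innerSL_apply_apply, inner_smul_right, inner_mul_inner_swap, ← RCLike.ofReal_mul,
    RCLike.ofReal_re] at h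
  simp only [← ENNReal.ofReal_norm_sq, ← ENNReal.ofReal_mul (hc0 _)]
  exact ENNReal.tsum_ofReal_eq_of_hasSum (fun i => mul_nonneg (hc0 i) (sq_nonneg _)) h

end

theorem schatten_of_summable_diag_pow_general
    {H : Type*} [NormedAddCommGroup H] [InnerProductSpace ℂ H] [CompleteSpace H]
    (T : H →L[ℂ] H) (hTpos : 0 ≤ T)
    (lam : ℕ → ℝ) (e : ℕ → H) (he : Orthonormal ℂ e)
    (hlam_nonneg : ∀ j, 0 ≤ lam j) (hlam_anti : Antitone lam)
    (hT : ∀ f : H, T f = ∑' j, (lam j : ℂ) • (⟪e j, f⟫_ℂ • e j))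
    (p : ℝ) (hp0 : 0 < p) (hp1 : p < 1)
    (f : HilbertBasis ℕ ℂ H)
    (hsum : Summable (fun k => (⟪T (f k), f k⟫_ℂ).re ^ p)) :
    Summable (fun j => lam j ^ p) := by
  have hdiag k : ∑' j, ENNReal.ofReal (lam j) * ‖⟪e j, f k⟫_ℂ‖ₑ ^ 2 =
      ENNReal.ofReal (⟪T (f k), f k⟫_ℂ).re := by
    rw [hT]
    exact he.tsum_ofReal_mul_enorm_inner_sq hlam_nonneg (fun j => hlam_anti j.zero_le) (f k)
  have hrow j : ∑' k, ‖⟪e j, f k⟫_ℂ‖ₑ ^ 2 = 1 := by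
    rw [f.tsum_enorm_inner_sq, he.enorm_eq_one, one_pow]
  have hcol k : ∑' j, ‖⟪e j, f k⟫_ℂ‖ₑ ^ 2 ≤ 1 :=
    (he.tsum_enorm_inner_sq_le (f k)).trans_eq (by rw [f.orthonormal.enorm_eq_one, one_pow])
  have hdiag_nonneg k : 0 ≤ (⟪T (f k), f k⟫_ℂ).re :=
    ((T.nonneg_iff_isPositive).1 hTpos).re_inner_nonneg_left (f k)
  have hmajor := ENNReal.tsum_rpow_le_tsum_rpow_tsum_mul
    (x := fun j => ENNReal.ofReal (lam j)) hp0.le hp1.le hrow hcol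
  simp only [hdiag, ENNReal.ofReal_rpow_of_nonneg (hdiag_nonneg _) hp0.le,
    ENNReal.ofReal_rpow_of_nonneg (hlam_nonneg _) hp0.le] at hmajor
  exact (ENNReal.summable_toReal (ne_top_of_le_ne_top hsum.tsum_ofReal_ne_top hmajor)).congr
    fun j => ENNReal.toReal_ofReal (Real.rpow_nonneg (hlam_nonneg j) p)

/-- If `T` is a compact positive operator on a separable complex Hilbert space with spectral
decomposition `T f = Σ_j λ_j ⟨f, e_j⟩ e_j` (`{e_j}` orthonormal, `λ_j ≥ 0` decreasing to `0`),
`0 < p < 1`, and `{f_k}` is an orthonormal basis with `Σ_k ⟨T f_k, f_k⟩ ^ p < ∞`, then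
`Σ_j λ_j ^ p < ∞`, i.e. `T` belongs to the Schatten class `S_p`. -/
theorem schatten_of_summable_diag_pow
    {H : Type*} [NormedAddCommGroup H] [InnerProductSpace ℂ H] [CompleteSpace H]
    [TopologicalSpace.SeparableSpace H]
    (T : H →L[ℂ] H) (hTcompact : IsCompactOperator T) (hTpos : 0 ≤ T)
    (lam : ℕ → ℝ) (e : ℕ → H) (he : Orthonormal ℂ e)
    (hlam_nonneg : ∀ j, 0 ≤ lam j) (hlam_anti : Antitone lam)
    (hlam_lim : Filter.Tendsto lam Filter.atTop (nhds 0))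
    (hT : ∀ f : H, T f = ∑' j, (lam j : ℂ) • (⟪e j, f⟫_ℂ • e j))
    (p : ℝ) (hp0 : 0 < p) (hp1 : p < 1)
    (f : HilbertBasis ℕ ℂ H)
    (hsum : Summable (fun k => (⟪T (f k), f k⟫_ℂ).re ^ p)) :
    Summable (fun j => lam j ^ p) :=
  schatten_of_summable_diag_pow_general T hTpos lam e he hlam_nonneg hlam_anti hT p hp0 hp1 f hsum
end

section
/- Korányi-type estimate on the upper half-plane: for every δ > 0 there exists C_δ > 0 such that for all z, w, ζ in the upper half-plane with hyperbolic distance d(z,w) ≤ δ, one has |(ζ − conj(z))/(ζ − conj(w)) − 1| ≤ C_δ · d(z, w). -/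
open scoped UpperHalfPlane ComplexConjugate

/-!
Since `(ζ - conj z) / (ζ - conj w) - 1 = conj (w - z) / (ζ - conj w)` and
`Im (ζ - conj w) = Im ζ + Im w > Im w`, the left side is at most `|z - w| / Im w`. The Euclidean
distance is controlled by the hyperbolic one through `|z - w| ≤ Im w · (exp d(z,w) - 1)`, and
`exp d - 1 ≤ d · exp d ≤ exp δ · d` for `d ≤ δ`.
-/

open Real

theorem Real.exp_sub_one_le_mul_exp (x : ℝ) : exp x - 1 ≤ x * exp x := by
  have h : 1 - x ≤ exp (-x) := by linarith [add_one_le_exp (-x)]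
  have hx : exp (-x) * exp x = 1 := by rw [← exp_add, neg_add_cancel, exp_zero]
  nlinarith [exp_pos x]

theorem Complex.norm_div_sub_conj_sub_one {ζ z w : ℂ} (h : ζ - conj w ≠ 0) :
    ‖(ζ - conj z) / (ζ - conj w) - 1‖ = dist z w / ‖ζ - conj w‖ := by
  rw [div_sub_one h, sub_sub_sub_cancel_left, ← map_sub, norm_div, Complex.norm_conj,
    dist_eq_norm, norm_sub_rev]

namespace UpperHalfPlane

theorem im_lt_norm_sub_conj (ζ w : ℍ) : w.im < ‖(ζ : ℂ) - conj (w : ℂ)‖ := by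
  have him : ((ζ : ℂ) - conj (w : ℂ)).im = ζ.im + w.im := by simp
  linarith [Complex.im_le_norm ((ζ : ℂ) - conj (w : ℂ)), ζ.im_pos]

theorem norm_div_sub_conj_sub_one_le (z w ζ : ℍ) :
    ‖((ζ : ℂ) - conj (z : ℂ)) / ((ζ : ℂ) - conj (w : ℂ)) - 1‖ ≤ exp (dist z w) - 1 := by
  have hden := im_lt_norm_sub_conj ζ w
  rw [Complex.norm_div_sub_conj_sub_one (norm_pos_iff.mp (w.im_pos.trans hden))]
  calc dist (z : ℂ) w / ‖(ζ : ℂ) - conj (w : ℂ)‖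
      ≤ dist (z : ℂ) w / w.im := div_le_div_of_nonneg_left dist_nonneg w.im_pos hden.le
    _ ≤ exp (dist z w) - 1 := (div_le_iff₀' w.im_pos).mpr (dist_coe_le z w)

end UpperHalfPlane

theorem koranyi_upperHalfPlane_general (δ : ℝ) :
    ∃ C : ℝ, 0 < C ∧ ∀ z w ζ : ℍ, dist z w ≤ δ →
      ‖((ζ : ℂ) - (starRingEnd ℂ) (z : ℂ)) / ((ζ : ℂ) - (starRingEnd ℂ) (w : ℂ)) - 1‖ ≤
        C * dist z w := by
  refine ⟨exp δ, exp_pos δ, fun z w ζ hzw => ?_⟩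
  calc _ ≤ exp (dist z w) - 1 := UpperHalfPlane.norm_div_sub_conj_sub_one_le z w ζ
    _ ≤ dist z w * exp (dist z w) := exp_sub_one_le_mul_exp _
    _ ≤ exp δ * dist z w := by
      rw [mul_comm]
      gcongr

/-- Korányi-type estimate on the upper half-plane: for every `δ > 0` there is `C_δ > 0` such
that for all `z, w, ζ` in the upper half-plane (with its hyperbolic metric) with
`d(z,w) ≤ δ`, one has `|(ζ - conj z)/(ζ - conj w) - 1| ≤ C_δ · d(z,w)`. -/
theorem koranyi_upperHalfPlane (δ : ℝ) (hδ : 0 < δ) :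
    ∃ C : ℝ, 0 < C ∧ ∀ z w ζ : ℍ, dist z w ≤ δ →
      ‖((ζ : ℂ) - (starRingEnd ℂ) (z : ℂ)) / ((ζ : ℂ) - (starRingEnd ℂ) (w : ℂ)) - 1‖ ≤
        C * dist z w :=
  koranyi_upperHalfPlane_general δ
end

section
/- Let ν > -1, let α, β ∈ ℝ with α > 1, β > 1 and α > β. Then for every ε > 0 there exists A_ε > 0 such that if (z_j = x_j + i y_j) is a sequence in the upper half-plane with pairwise hyperbolic distances d(z_j, z_k) ≥ A_ε for j ≠ k, then for each j, Σ_{k ≠ j} |z_k − conj(z_j)|^{-α} y_k^β ≤ ε · y_j^{β − α}. -/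
open Real

open scoped UpperHalfPlane
set_option maxHeartbeats 1000000


open Real

private lemma BT.rpow_anti {x y e : ℝ} (hx : 0 < x) (hxy : x ≤ y) (he : e ≤ 0) :
    y ^ e ≤ x ^ e := by
  have hy : 0 < y := lt_of_lt_of_le hx hxy
  rw [← neg_neg e, Real.rpow_neg hx.le, Real.rpow_neg hy.le]
  exact inv_anti₀ (Real.rpow_pos_of_pos hx _)
    (Real.rpow_le_rpow hx.le hxy (neg_nonneg.2 he))

private lemma BT.pow_eq {t : ℝ} (n : ℕ) (a b : ℝ) :
    (2:ℝ) ^ ((t) * a) * ((2:ℝ) ^ (t)) ^ (-b) = ((2:ℝ) ^ (a - b)) ^ (t) := by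
  rw [← Real.rpow_mul (by norm_num : (0:ℝ) ≤ 2), ← Real.rpow_add two_pos,
    ← Real.rpow_mul (by norm_num : (0:ℝ) ≤ 2)]
  ring_nf

private lemma BT.summable_aux {a b : ℝ} (ha : 0 < a) (hab : a < b) :
    Summable fun m : ℤ => (2:ℝ) ^ ((m : ℝ) * a) * (1 + (2:ℝ) ^ (m : ℝ)) ^ (-b) := by
  have h2 : (0:ℝ) ≤ 2 := by norm_num
  have key : ∀ t : ℝ, (2:ℝ) ^ (t * a) * (1 + (2:ℝ) ^ t) ^ (-b) ≤ ((2:ℝ) ^ (a - b)) ^ t := by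
    intro t
    have hpos : (0:ℝ) < (2:ℝ) ^ t := Real.rpow_pos_of_pos two_pos t
    have h1 : (1 + (2:ℝ) ^ t) ^ (-b) ≤ ((2:ℝ) ^ t) ^ (-b) :=
      BT.rpow_anti hpos (by linarith) (by linarith)
    calc (2:ℝ) ^ (t * a) * (1 + (2:ℝ) ^ t) ^ (-b)
        ≤ (2:ℝ) ^ (t * a) * ((2:ℝ) ^ t) ^ (-b) :=
          mul_le_mul_of_nonneg_left h1 (Real.rpow_nonneg h2 _)
      _ = ((2:ℝ) ^ (a - b)) ^ t := BT.pow_eq 0 a b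
  have hr0 : (0:ℝ) ≤ (2:ℝ) ^ (a - b) := Real.rpow_nonneg h2 _
  have hr1 : (2:ℝ) ^ (a - b) < 1 :=
    Real.rpow_lt_one_of_one_lt_of_neg one_lt_two (by linarith)
  have hnonneg : ∀ m : ℤ, 0 ≤ (2:ℝ) ^ ((m : ℝ) * a) * (1 + (2:ℝ) ^ (m : ℝ)) ^ (-b) := by
    intro m
    exact mul_nonneg (Real.rpow_nonneg h2 _) (Real.rpow_nonneg (by positivity) _)
  apply Summable.of_nat_of_neg_add_one
  · apply Summable.of_nonneg_of_le (fun n => hnonneg _) (fun n => ?_)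
      (summable_geometric_of_lt_one hr0 hr1)
    calc (2:ℝ) ^ (((n : ℤ) : ℝ) * a) * (1 + (2:ℝ) ^ ((n : ℤ) : ℝ)) ^ (-b)
        ≤ ((2:ℝ) ^ (a - b)) ^ ((n : ℤ) : ℝ) := key _
      _ = ((2:ℝ) ^ (a - b)) ^ (n : ℕ) := by
          push_cast
          exact Real.rpow_natCast _ n
  · apply Summable.of_nonneg_of_le (fun n => hnonneg _) (fun n => ?_)
      (summable_geometric_of_lt_one (Real.rpow_nonneg h2 (-a))
        (Real.rpow_lt_one_of_one_lt_of_neg one_lt_two (by linarith)))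
    have h1 : (1 + (2:ℝ) ^ ((-((n:ℤ) + 1) : ℤ) : ℝ)) ^ (-b) ≤ 1 :=
      Real.rpow_le_one_of_one_le_of_nonpos
        (by nlinarith [Real.rpow_pos_of_pos two_pos ((-((n:ℤ) + 1) : ℤ) : ℝ)]) (by linarith)
    calc (2:ℝ) ^ ((( -((n:ℤ) + 1) : ℤ) : ℝ) * a) * (1 + (2:ℝ) ^ ((-((n:ℤ) + 1) : ℤ) : ℝ)) ^ (-b)
        ≤ (2:ℝ) ^ ((( -((n:ℤ) + 1) : ℤ) : ℝ) * a) * 1 := by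
          apply mul_le_mul_of_nonneg_left h1 (Real.rpow_nonneg h2 _)
      _ = ((2:ℝ) ^ (-a)) ^ (n:ℕ) * (2:ℝ) ^ (-a) := by
          rw [mul_one, ← Real.rpow_natCast ((2:ℝ) ^ (-a)) n,
            ← Real.rpow_mul h2, ← Real.rpow_add two_pos]
          push_cast
          ring_nf
      _ ≤ ((2:ℝ) ^ (-a)) ^ (n:ℕ) * 1 := by
          apply mul_le_mul_of_nonneg_left _ (pow_nonneg (Real.rpow_nonneg h2 _) _)
          exact Real.rpow_le_one_of_one_le_of_nonpos (by norm_num) (by linarith)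
      _ = ((2:ℝ) ^ (-a)) ^ (n:ℕ) := mul_one _


private lemma BT.dist_coe_sq (u v : ℍ) :
    dist (u : ℂ) (v : ℂ) ^ 2 = (u.re - v.re) ^ 2 + (u.im - v.im) ^ 2 := by
  rw [Complex.dist_eq, Complex.sq_norm, Complex.normSq_apply]
  simp only [Complex.sub_re, Complex.sub_im, UpperHalfPlane.coe_re, UpperHalfPlane.coe_im]
  ring

private lemma BT.tsum_prod_mul {f g : ℤ → ℝ} (hf : Summable f) (hg : Summable g)
    (hf0 : ∀ m, 0 ≤ f m) (hg0 : ∀ n, 0 ≤ g n) :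
    ∑' q : ℤ × ℤ, f q.1 * g q.2 = (∑' m, f m) * ∑' n, g n := by
  rw [Summable.tsum_prod' (hf.mul_of_nonneg hg hf0 hg0) (fun m => (hg.mul_left (f m)))]
  calc ∑' m, ∑' n, f m * g n = ∑' m, f m * ∑' n, g n := by
        exact tsum_congr fun m => tsum_mul_left
    _ = (∑' m, f m) * ∑' n, g n := tsum_mul_right

private lemma BT.assemble1 (cc b e q t p C : ℝ) (ht : 0 < t) (hp : 0 < p) (hC : 0 < C)
    (hrel : q = cc - b - e) :
    (t * 2 * p) ^ cc * ((1 + t) * p) ^ (-b) * (C * p) ^ (-e) =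
      (2:ℝ) ^ cc * p ^ q * C ^ (-e) * (t ^ cc * (1 + t) ^ (-b)) := by
  have h1t : (0:ℝ) < 1 + t := by linarith
  have l1 : (t * 2 * p) ^ cc = Real.exp ((Real.log t + Real.log 2 + Real.log p) * cc) := by
    rw [Real.rpow_def_of_pos (by positivity), Real.log_mul (by positivity) hp.ne',
      Real.log_mul ht.ne' two_ne_zero]
  have l2 : ((1 + t) * p) ^ (-b) = Real.exp ((Real.log (1 + t) + Real.log p) * (-b)) := by
    rw [Real.rpow_def_of_pos (by positivity), Real.log_mul h1t.ne' hp.ne']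
  have l3 : (C * p) ^ (-e) = Real.exp ((Real.log C + Real.log p) * (-e)) := by
    rw [Real.rpow_def_of_pos (by positivity), Real.log_mul hC.ne' hp.ne']
  have r1 : (2:ℝ) ^ cc = Real.exp (Real.log 2 * cc) := by
    rw [Real.rpow_def_of_pos two_pos]
  have r2 : p ^ q = Real.exp (Real.log p * q) := by rw [Real.rpow_def_of_pos hp]
  have r3 : C ^ (-e) = Real.exp (Real.log C * (-e)) := by rw [Real.rpow_def_of_pos hC]
  have r4 : t ^ cc = Real.exp (Real.log t * cc) := by rw [Real.rpow_def_of_pos ht]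
  have r5 : (1 + t) ^ (-b) = Real.exp (Real.log (1 + t) * (-b)) := by
    rw [Real.rpow_def_of_pos h1t]
  rw [l1, l2, l3, r1, r2, r3, r4, r5]
  simp only [← Real.exp_add]
  rw [Real.exp_eq_exp, hrel]
  ring

private lemma BT.assemble2 (α β γ t p E N : ℝ) (ht : 0 < t) (hp : 0 < p) (hE : 0 < E)
    (hN : 0 < N) :
    (t * 2 * p) ^ β * (N / 2 * (t * p * E / 4)) ^ (-γ) * ((1 + t) * p) ^ (-(α - γ)) =
      (2:ℝ) ^ γ * ((2:ℝ) ^ β * (4:ℝ) ^ γ * E ^ (-γ) * p ^ (β - α)) *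
        (t ^ (β - γ) * (1 + t) ^ (-(α - γ))) * N ^ (-γ) := by
  have h1t : (0:ℝ) < 1 + t := by linarith
  have l1 : (t * 2 * p) ^ β = Real.exp ((Real.log t + Real.log 2 + Real.log p) * β) := by
    rw [Real.rpow_def_of_pos (by positivity), Real.log_mul (by positivity) hp.ne',
      Real.log_mul ht.ne' two_ne_zero]
  have l2 : (N / 2 * (t * p * E / 4)) ^ (-γ) =
      Real.exp ((Real.log N - Real.log 2 + (Real.log t + Real.log p + Real.log E -
        Real.log 4)) * (-γ)) := by
    rw [Real.rpow_def_of_pos (by positivity),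
      Real.log_mul (by positivity) (by positivity),
      Real.log_div hN.ne' two_ne_zero,
      Real.log_div (by positivity) (by norm_num : (4:ℝ) ≠ 0),
      Real.log_mul (by positivity) hE.ne', Real.log_mul ht.ne' hp.ne']
  have l3 : ((1 + t) * p) ^ (-(α - γ)) =
      Real.exp ((Real.log (1 + t) + Real.log p) * (-(α - γ))) := by
    rw [Real.rpow_def_of_pos (by positivity), Real.log_mul h1t.ne' hp.ne']
  have r1 : (2:ℝ) ^ γ = Real.exp (Real.log 2 * γ) := by rw [Real.rpow_def_of_pos two_pos]
  have r2 : (2:ℝ) ^ β = Real.exp (Real.log 2 * β) := by rw [Real.rpow_def_of_pos two_pos]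
  have r3 : (4:ℝ) ^ γ = Real.exp (Real.log 4 * γ) := by
    rw [Real.rpow_def_of_pos (by norm_num : (0:ℝ) < 4)]
  have r4 : E ^ (-γ) = Real.exp (Real.log E * (-γ)) := by rw [Real.rpow_def_of_pos hE]
  have r5 : p ^ (β - α) = Real.exp (Real.log p * (β - α)) := by
    rw [Real.rpow_def_of_pos hp]
  have r6 : t ^ (β - γ) = Real.exp (Real.log t * (β - γ)) := by
    rw [Real.rpow_def_of_pos ht]
  have r7 : (1 + t) ^ (-(α - γ)) = Real.exp (Real.log (1 + t) * (-(α - γ))) := by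
    rw [Real.rpow_def_of_pos h1t]
  have r8 : N ^ (-γ) = Real.exp (Real.log N * (-γ)) := by rw [Real.rpow_def_of_pos hN]
  rw [l1, l2, l3, r1, r2, r3, r4, r5, r6, r7, r8]
  simp only [← Real.exp_add]
  rw [Real.exp_eq_exp]
  ring

/-- Rank-one Bekollé–Temgoua separation lemma: let `α > 1`, `β > 1`, `α > β`. For every
`ε > 0` there is `A_ε > 0` such that for every sequence `(z_j)` in the upper half-plane with
pairwise hyperbolic distances `d(z_j, z_k) ≥ A_ε` (`j ≠ k`), one has for each `j`:
`Σ_{k ≠ j} |z_k - conj z_j|^{-α} (Im z_k)^β ≤ ε · (Im z_j)^{β - α}`. -/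
theorem bekolle_temgoua_upperHalfPlane
    (α β : ℝ) (hα : 1 < α) (hβ : 1 < β) (hαβ : β < α) (ε : ℝ) (hε : 0 < ε) :
    ∃ A : ℝ, 0 < A ∧ ∀ z : ℕ → ℍ,
      (∀ j k : ℕ, j ≠ k → A ≤ dist (z j) (z k)) → ∀ j : ℕ,
        Summable (fun k : {k : ℕ // k ≠ j} =>
          ‖(z k : ℂ) - (starRingEnd ℂ) ((z j : ℂ))‖ ^ (-α) * (z k).im ^ β) ∧
        (∑' k : {k : ℕ // k ≠ j},
            ‖(z k : ℂ) - (starRingEnd ℂ) ((z j : ℂ))‖ ^ (-α) * (z k).im ^ β) ≤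
          ε * (z j).im ^ (β - α) := by
  have hα0 : (0:ℝ) < α := by linarith
  have hβ0 : (0:ℝ) < β := by linarith
  -- exponents
  set θ : ℝ := min β (α - β) / α with hθdef
  have hmin0 : 0 < min β (α - β) := lt_min hβ0 (by linarith)
  have hθ0 : 0 < θ := div_pos hmin0 hα0
  have hαθ : α * θ = min β (α - β) := by
    rw [hθdef]; field_simp
  have hθ1 : θ < 1 := by
    rw [hθdef, div_lt_one hα0]
    exact lt_of_le_of_lt (min_le_left _ _) (by linarith)
  set c : ℝ := β - α * θ / 2 with hcdef
  have hc0 : 0 < c := by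
    have := min_le_left β (α - β); rw [hcdef, hαθ]; linarith
  have hcb : c < α * (1 - θ) := by
    have := min_le_right β (α - β)
    have h2 : α * (1 - θ) = α - α * θ := by ring
    rw [hcdef, h2, hαθ]; linarith
  set γ : ℝ := (1 + β) / 2 with hγdef
  have hγ1 : 1 < γ := by rw [hγdef]; linarith
  have hγβ : γ < β := by rw [hγdef]; linarith
  have hγα : γ < α := lt_trans hγβ hαβ
  set δ : ℝ := min (α * θ / 2) (γ / 2) with hδdef
  have hδ0 : 0 < δ := lt_min (by positivity) (by positivity)
  -- base summable functions
  obtain ⟨φc, hφcdef⟩ : ∃ f : ℤ → ℝ,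
      f = fun m : ℤ => (2:ℝ) ^ ((m:ℝ) * c) * (1 + (2:ℝ) ^ (m:ℝ)) ^ (-(α * (1 - θ))) := ⟨_, rfl⟩
  obtain ⟨φ1, hφ1def⟩ : ∃ f : ℤ → ℝ,
      f = fun m : ℤ => (2:ℝ) ^ ((m:ℝ) * (β - γ)) * (1 + (2:ℝ) ^ (m:ℝ)) ^ (-(α - γ)) := ⟨_, rfl⟩
  obtain ⟨w1, hw1def⟩ : ∃ f : ℤ → ℝ,
      f = fun n : ℤ => if n.natAbs ≤ 1 then (1:ℝ) else 0 := ⟨_, rfl⟩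
  obtain ⟨w2, hw2def⟩ : ∃ f : ℤ → ℝ,
      f = fun n : ℤ => ((n.natAbs : ℝ)) ^ (-γ) := ⟨_, rfl⟩
  have hφc : Summable φc := by rw [hφcdef]; exact BT.summable_aux hc0 hcb
  have hφ1 : Summable φ1 := by rw [hφ1def]; exact BT.summable_aux (by linarith) (by linarith)
  have hw1 : Summable w1 := by
    apply summable_of_ne_finset_zero (s := ({-1, 0, 1} : Finset ℤ))
    intro b hb
    simp only [hw1def]
    simp only [Finset.mem_insert, Finset.mem_singleton] at hb
    push_neg at hb
    have : ¬ b.natAbs ≤ 1 := by omega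
    simp [this]
  have hw2 : Summable w2 := by
    apply Summable.of_nat_of_neg_add_one
    · simpa [hw2def] using Real.summable_nat_rpow.mpr (by linarith : -γ < -1)
    · have h := (summable_nat_add_iff (f := fun n : ℕ => ((n:ℝ)) ^ (-γ)) 1).mpr
        (Real.summable_nat_rpow.mpr (by linarith : -γ < -1))
      apply h.congr
      intro n
      have hn : ((-((n:ℤ) + 1)) : ℤ).natAbs = n + 1 := by omega
      simp only [hw2def, hn]
      try push_cast
      try ring_nf
  have hφc0 : ∀ m, 0 ≤ φc m := fun m => by simp only [hφcdef]; positivity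
  have hφ10 : ∀ m, 0 ≤ φ1 m := fun m => by simp only [hφ1def]; positivity
  have hw10 : ∀ n, 0 ≤ w1 n := fun n => by simp only [hw1def]; split_ifs <;> norm_num
  have hw20 : ∀ n, 0 ≤ w2 n := fun n => by simp only [hw2def]; positivity
  -- constants
  obtain ⟨Cc, hCcdef⟩ : ∃ x : ℝ, x = ∑' m, φc m := ⟨_, rfl⟩
  obtain ⟨C1, hC1def⟩ : ∃ x : ℝ, x = ∑' m, φ1 m := ⟨_, rfl⟩
  obtain ⟨W1, hW1def⟩ : ∃ x : ℝ, x = ∑' n, w1 n := ⟨_, rfl⟩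
  obtain ⟨W2, hW2def⟩ : ∃ x : ℝ, x = ∑' n, w2 n := ⟨_, rfl⟩
  have hCc0 : 0 ≤ Cc := hCcdef ▸ tsum_nonneg hφc0
  have hC10 : 0 ≤ C1 := hC1def ▸ tsum_nonneg hφ10
  have hW10 : 0 ≤ W1 := hW1def ▸ tsum_nonneg hw10
  have hW20 : 0 ≤ W2 := hW2def ▸ tsum_nonneg hw20
  obtain ⟨K, hKdef⟩ : ∃ x : ℝ,
      x = (2:ℝ) ^ c * Cc * W1 + (2:ℝ) ^ γ * ((2:ℝ) ^ β * (4:ℝ) ^ γ) * C1 * W2 := ⟨_, rfl⟩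
  have hK0 : 0 ≤ K := by rw [hKdef]; positivity
  obtain ⟨A, hAdef⟩ : ∃ x : ℝ, x = max 2 (Real.log ((K + 1) / ε) / δ + 1) := ⟨_, rfl⟩
  have hA2 : (2:ℝ) ≤ A := hAdef ▸ le_max_left _ _
  have hA0 : (0:ℝ) < A := by linarith
  have hKe : K * Real.exp (-(δ * A)) ≤ ε := by
    have h1 : Real.log ((K + 1) / ε) / δ + 1 ≤ A := hAdef ▸ le_max_right _ _
    have h2 : Real.log ((K + 1) / ε) ≤ δ * A - δ := by
      have := (div_le_iff₀ hδ0).mp (by linarith : Real.log ((K + 1) / ε) / δ ≤ A - 1)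
      linarith [this]
    have h3 : Real.exp (-(δ * A)) ≤ Real.exp (-(Real.log ((K + 1) / ε) + δ)) :=
      Real.exp_le_exp.mpr (by linarith)
    have h4 : Real.exp (-(Real.log ((K + 1) / ε) + δ)) ≤ ε / (K + 1) := by
      rw [neg_add, Real.exp_add, exp_neg, Real.exp_log (by positivity)]
      calc ((K + 1) / ε)⁻¹ * Real.exp (-δ) ≤ ((K + 1) / ε)⁻¹ * 1 := by
            apply mul_le_mul_of_nonneg_left _ (by positivity)
            exact Real.exp_le_one_iff.mpr (by linarith)
        _ = ε / (K + 1) := by rw [mul_one, inv_div]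
    have h5 : Real.exp (-(δ * A)) ≤ ε / (K + 1) := le_trans h3 h4
    calc K * Real.exp (-(δ * A)) ≤ K * (ε / (K + 1)) :=
          mul_le_mul_of_nonneg_left h5 hK0
      _ ≤ ε := by
          rw [mul_div_assoc']
          rw [div_le_iff₀ (by linarith : (0:ℝ) < K + 1)]
          nlinarith
  refine ⟨A, hA0, fun z hsep j => ?_⟩
  classical
  obtain ⟨p, hpdef⟩ : ∃ x : ℝ, x = (z j).im := ⟨_, rfl⟩
  have hp : 0 < p := by rw [hpdef]; exact (z j).im_pos
  obtain ⟨E, hEdef⟩ : ∃ x : ℝ, x = Real.exp (A / 2) := ⟨_, rfl⟩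
  have hE0 : 0 < E := hEdef ▸ Real.exp_pos _
  obtain ⟨mK, hmKdef⟩ : ∃ f : {k : ℕ // k ≠ j} → ℤ,
      f = fun k : {k : ℕ // k ≠ j} => ⌊Real.logb 2 ((z ↑k).im / p)⌋ := ⟨_, rfl⟩
  obtain ⟨nK, hnKdef⟩ : ∃ f : {k : ℕ // k ≠ j} → ℤ,
      f = fun k : {k : ℕ // k ≠ j} => ⌊((z ↑k).re - (z j).re) / ((2:ℝ) ^ (mK k : ℝ) * p * E / 4)⌋ := ⟨_, rfl⟩
  obtain ⟨Kc, hKcdef⟩ : ∃ x : ℝ,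
      x = (2:ℝ) ^ c * p ^ (β - α) * (2 * Real.cosh A) ^ (-(α * θ / 2)) := ⟨_, rfl⟩
  obtain ⟨Kp, hKpdef⟩ : ∃ x : ℝ,
      x = (2:ℝ) ^ γ * ((2:ℝ) ^ β * (4:ℝ) ^ γ * E ^ (-γ) * p ^ (β - α)) := ⟨_, rfl⟩
  have hKc0 : 0 ≤ Kc := by
    rw [hKcdef]
    have h1 : (0:ℝ) ≤ p ^ (β - α) := Real.rpow_nonneg hp.le _
    have h2 : (0:ℝ) ≤ (2 * Real.cosh A) ^ (-(α * θ / 2)) :=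
      Real.rpow_nonneg (by positivity) _
    positivity
  have hKp0 : 0 ≤ Kp := by
    rw [hKpdef]
    have h1 : (0:ℝ) ≤ p ^ (β - α) := Real.rpow_nonneg hp.le _
    have h3 : (0:ℝ) ≤ E ^ (-γ) := Real.rpow_nonneg hE0.le _
    positivity
  obtain ⟨G, hGdef⟩ : ∃ g : ℤ × ℤ → ℝ, g = fun q =>
      Kc * φc q.1 * w1 q.2 + Kp * φ1 q.1 * w2 q.2 := ⟨_, rfl⟩
  have hG0 : ∀ q, 0 ≤ G q := by
    intro q
    rw [hGdef]
    exact add_nonneg (mul_nonneg (mul_nonneg hKc0 (hφc0 _)) (hw10 _))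
      (mul_nonneg (mul_nonneg hKp0 (hφ10 _)) (hw20 _))
  have hs1 : Summable (fun q : ℤ × ℤ => Kc * φc q.1 * w1 q.2) :=
    Summable.mul_of_nonneg (hφc.mul_left Kc) hw1
      (fun m => mul_nonneg hKc0 (hφc0 m)) hw10
  have hs2 : Summable (fun q : ℤ × ℤ => Kp * φ1 q.1 * w2 q.2) :=
    Summable.mul_of_nonneg (hφ1.mul_left Kp) hw2
      (fun m => mul_nonneg hKp0 (hφ10 m)) hw20
  have hGsum : Summable G := by
    rw [hGdef]; exact hs1.add hs2
  have hsm0 : ∀ m : ℤ, 0 < (2:ℝ) ^ (m : ℝ) * p * E / 4 := by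
    intro m
    have h1 : (0:ℝ) < (2:ℝ) ^ (m : ℝ) := Real.rpow_pos_of_pos two_pos _
    positivity
  have hstrip : ∀ k : {k : ℕ // k ≠ j},
      (2:ℝ) ^ (mK k : ℝ) * p ≤ (z ↑k).im ∧ (z ↑k).im < (2:ℝ) ^ ((mK k : ℝ) + 1) * p := by
    intro k
    have hyk : 0 < (z ↑k).im := (z (k : ℕ)).im_pos
    have ht : 0 < (z ↑k).im / p := div_pos hyk hp
    have h1 : ((mK k : ℝ)) ≤ Real.logb 2 ((z ↑k).im / p) := by
      simp only [hmKdef]; exact Int.floor_le _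
    have h2 : Real.logb 2 ((z ↑k).im / p) < (mK k : ℝ) + 1 := by
      simp only [hmKdef]
      exact_mod_cast Int.lt_floor_add_one (Real.logb 2 ((z ↑k).im / p))
    constructor
    · have h3 := Real.rpow_le_rpow_of_exponent_le one_le_two h1
      rw [Real.rpow_logb two_pos (by norm_num) ht] at h3
      calc (2:ℝ) ^ (mK k : ℝ) * p ≤ ((z ↑k).im / p) * p :=
            mul_le_mul_of_nonneg_right h3 hp.le
        _ = (z ↑k).im := div_mul_cancel₀ _ hp.ne'
    · have h3 := Real.rpow_lt_rpow_of_exponent_lt one_lt_two h2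
      rw [Real.rpow_logb two_pos (by norm_num) ht] at h3
      calc (z ↑k).im = ((z ↑k).im / p) * p := (div_mul_cancel₀ _ hp.ne').symm
        _ < (2:ℝ) ^ ((mK k : ℝ) + 1) * p := mul_lt_mul_of_pos_right h3 hp
  have hΔi : ∀ k : {k : ℕ // k ≠ j},
      (nK k : ℝ) * ((2:ℝ) ^ (mK k : ℝ) * p * E / 4) ≤ (z ↑k).re - (z j).re ∧
      (z ↑k).re - (z j).re < ((nK k : ℝ) + 1) * ((2:ℝ) ^ (mK k : ℝ) * p * E / 4) := by
    intro k
    have hs := hsm0 (mK k)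
    have h1 : ((nK k : ℝ)) ≤ ((z ↑k).re - (z j).re) / ((2:ℝ) ^ (mK k : ℝ) * p * E / 4) := by
      simp only [hnKdef]; exact Int.floor_le _
    have h2 : ((z ↑k).re - (z j).re) / ((2:ℝ) ^ (mK k : ℝ) * p * E / 4) < (nK k : ℝ) + 1 := by
      simp only [hnKdef]
      exact_mod_cast Int.lt_floor_add_one (((z ↑k).re - (z j).re) / ((2:ℝ) ^ (mK k : ℝ) * p * E / 4))
    exact ⟨(le_div_iff₀ hs).mp h1, (div_lt_iff₀ hs).mp h2⟩
  have haddr : Function.Injective (fun k => (mK k, nK k) :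
      {k : ℕ // k ≠ j} → ℤ × ℤ) := by
    intro k l hkl
    simp only [Prod.mk.injEq] at hkl
    obtain ⟨hm, hn⟩ := hkl
    by_contra hne
    have hknel : (k : ℕ) ≠ (l : ℕ) := fun h => hne (Subtype.ext h)
    have hd : A ≤ dist (z ↑k) (z ↑l) := hsep (k : ℕ) (l : ℕ) hknel
    have hsk := hstrip k
    have hsl := hstrip l
    have hik := hΔi k
    have hil := hΔi l
    rw [hm] at hsk hik
    rw [hn] at hik
    have hyk : 0 < (z ↑k).im := (z (k : ℕ)).im_pos
    have hyl : 0 < (z ↑l).im := (z (l : ℕ)).im_pos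
    have hH : (0:ℝ) < (2:ℝ) ^ (mK l : ℝ) * p := by
      have h1 : (0:ℝ) < (2:ℝ) ^ (mK l : ℝ) := Real.rpow_pos_of_pos two_pos _
      positivity
    have h2m : (2:ℝ) ^ ((mK l : ℝ) + 1) * p = 2 * ((2:ℝ) ^ (mK l : ℝ) * p) := by
      rw [Real.rpow_add two_pos]; ring
    rw [h2m] at hsk hsl
    have hdy : ((z ↑k).im - (z ↑l).im) ^ 2 < ((2:ℝ) ^ (mK l : ℝ) * p) ^ 2 := by
      apply sq_lt_sq' <;> nlinarith only [hsk.1, hsk.2, hsl.1, hsl.2, hH]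
    have hdx : ((z ↑k).re - (z ↑l).re) ^ 2 < ((2:ℝ) ^ (mK l : ℝ) * p * E / 4) ^ 2 := by
      have e1 : (z ↑k).re - (z ↑l).re =
          ((z ↑k).re - (z j).re) - ((z ↑l).re - (z j).re) := by ring
      rw [e1]
      apply sq_lt_sq' <;> nlinarith only [hik.1, hik.2, hil.1, hil.2, hsm0 (mK l)]
    have hE2 : E ^ 2 = Real.exp A := by
      rw [hEdef, sq, ← Real.exp_add]
      ring_nf
    have hexpA : (4:ℝ) ≤ Real.exp A := by
      have e1 : (2:ℝ) ≤ Real.exp 1 := by have h := Real.add_one_le_exp (1:ℝ); linarith only [h]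
      have e2 : Real.exp 2 ≤ Real.exp A := Real.exp_le_exp.mpr hA2
      have e3 : Real.exp 1 * Real.exp 1 = Real.exp 2 := by
        rw [← Real.exp_add]; norm_num
      nlinarith only [e1, e2, e3, Real.exp_pos 1]
    have hcd := UpperHalfPlane.cosh_dist (z ↑k) (z ↑l)
    rw [BT.dist_coe_sq] at hcd
    have hub : Real.cosh (dist (z ↑k) (z ↑l)) < Real.cosh A := by
      rw [hcd]
      have hden : (0:ℝ) < 2 * (z ↑k).im * (z ↑l).im := by positivity
      have hden2 : (0:ℝ) < 2 * ((2:ℝ) ^ (mK l : ℝ) * p) ^ 2 := by positivity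
      have hdenle : 2 * ((2:ℝ) ^ (mK l : ℝ) * p) ^ 2 ≤ 2 * (z ↑k).im * (z ↑l).im := by
        nlinarith only [hsk.1, hsl.1, hH, hyk, hyl]
      have hnum0 : (0:ℝ) ≤ ((z ↑k).re - (z ↑l).re) ^ 2 + ((z ↑k).im - (z ↑l).im) ^ 2 := by
        positivity
      have hnumlt : ((z ↑k).re - (z ↑l).re) ^ 2 + ((z ↑k).im - (z ↑l).im) ^ 2 <
          ((2:ℝ) ^ (mK l : ℝ) * p * E / 4) ^ 2 + ((2:ℝ) ^ (mK l : ℝ) * p) ^ 2 := by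
        linarith only [hdx, hdy]
      have hcoshA : Real.exp A / 2 < Real.cosh A := by
        rw [Real.cosh_eq]
        have h := Real.exp_pos (-A)
        linarith only [h]
      calc 1 + (((z ↑k).re - (z ↑l).re) ^ 2 + ((z ↑k).im - (z ↑l).im) ^ 2) /
            (2 * (z ↑k).im * (z ↑l).im)
          ≤ 1 + (((z ↑k).re - (z ↑l).re) ^ 2 + ((z ↑k).im - (z ↑l).im) ^ 2) /
            (2 * ((2:ℝ) ^ (mK l : ℝ) * p) ^ 2) := by
            exact add_le_add_right (div_le_div_of_nonneg_left hnum0 hden2 hdenle) 1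
          _ < 1 + (((2:ℝ) ^ (mK l : ℝ) * p * E / 4) ^ 2 + ((2:ℝ) ^ (mK l : ℝ) * p) ^ 2) /
            (2 * ((2:ℝ) ^ (mK l : ℝ) * p) ^ 2) := by
            apply add_lt_add_right
            exact (div_lt_div_iff_of_pos_right hden2).mpr hnumlt
          _ = 3 / 2 + E ^ 2 / 32 := by
            field_simp
            ring
          _ ≤ Real.exp A / 2 := by rw [hE2]; nlinarith only [hexpA]
          _ < Real.cosh A := hcoshA
    have hfin : dist (z ↑k) (z ↑l) < A := by
      have h := Real.cosh_lt_cosh.mp hub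
      rwa [abs_of_nonneg dist_nonneg, abs_of_nonneg hA0.le] at h
    linarith only [hd, hfin]
  have hpoint : ∀ k : {k : ℕ // k ≠ j},
      ‖(z k : ℂ) - (starRingEnd ℂ) ((z j : ℂ))‖ ^ (-α) * (z k).im ^ β ≤ G (mK k, nK k) := by
    intro k
    have hyk : 0 < (z ↑k).im := (z (k : ℕ)).im_pos
    have hsk := hstrip k
    have hik := hΔi k
    have ht : (0:ℝ) < (2:ℝ) ^ (mK k : ℝ) := Real.rpow_pos_of_pos two_pos _
    have h2m : (2:ℝ) ^ ((mK k : ℝ) + 1) * p = (2:ℝ) ^ (mK k : ℝ) * 2 * p := by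
      rw [Real.rpow_add two_pos, Real.rpow_one]
    rw [h2m] at hsk
    set DD := ‖(z ↑k : ℂ) - (starRingEnd ℂ) ((z j : ℂ))‖ with hDDdef
    have hD2 : DD ^ 2 = ((z ↑k).re - (z j).re) ^ 2 + ((z ↑k).im + p) ^ 2 := by
      rw [hDDdef, hpdef, Complex.sq_norm, Complex.normSq_apply]
      simp only [Complex.sub_re, Complex.sub_im, Complex.conj_re, Complex.conj_im,
        UpperHalfPlane.coe_re, UpperHalfPlane.coe_im]
      ring
    have hDnn : 0 ≤ DD := norm_nonneg _
    have hD0 : 0 < DD := by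
      nlinarith only [hD2, hyk, hp, hDnn, sq_nonneg ((z ↑k).re - (z j).re)]
    have hDyp : (z ↑k).im + p ≤ DD := by
      nlinarith only [hD2, hD0, hyk, hp, sq_nonneg ((z ↑k).re - (z j).re)]
    have hypos : (0:ℝ) < (1 + (2:ℝ) ^ (mK k : ℝ)) * p := by positivity
    have hyp2 : (1 + (2:ℝ) ^ (mK k : ℝ)) * p ≤ (z ↑k).im + p := by
      nlinarith only [hsk.1]
    have hd : A ≤ dist (z j) (z ↑k) := hsep j (k : ℕ) (Ne.symm k.2)
    have hcoshpos : (0:ℝ) < Real.cosh A := Real.cosh_pos A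
    have hcosh : 2 * p * (z ↑k).im * Real.cosh A ≤ DD ^ 2 := by
      have hc1 : Real.cosh A ≤ Real.cosh (dist (z j) (z ↑k)) := by
        rw [Real.cosh_le_cosh, abs_of_nonneg hA0.le, abs_of_nonneg dist_nonneg]
        exact hd
      have hcd := UpperHalfPlane.cosh_dist (z j) (z ↑k)
      rw [BT.dist_coe_sq] at hcd
      have hjne : (z j).im ≠ 0 := ne_of_gt (z j).im_pos
      have hkne : (z ↑k).im ≠ 0 := ne_of_gt hyk
      have hkey : DD ^ 2 = 2 * p * (z ↑k).im *
          (Real.cosh (dist (z j) (z ↑k)) + 1) := by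
        rw [hD2, hcd, hpdef]
        field_simp
        ring
      rw [hkey]
      have h0 : (0:ℝ) < 2 * p * (z ↑k).im := by positivity
      have h1 := mul_le_mul_of_nonneg_left hc1 h0.le
      nlinarith only [h0, h1]
    by_cases hn1 : (nK k).natAbs ≤ 1
    · -- central points
      have hw1v : w1 (nK k) = 1 := by simp only [hw1def]; rw [if_pos hn1]
      have hb : (0:ℝ) ≤ α * (1 - θ) := by nlinarith only [hα0, hθ1]
      have he : (0:ℝ) ≤ α * θ / 2 := by positivity
      have hsplit : DD ^ (-α) = DD ^ (-(α * (1 - θ))) * DD ^ (-(α * θ)) := by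
        rw [← Real.rpow_add hD0]
        congr 1
        ring
      have h1 : DD ^ (-(α * (1 - θ))) ≤
          ((1 + (2:ℝ) ^ (mK k : ℝ)) * p) ^ (-(α * (1 - θ))) :=
        BT.rpow_anti hypos (le_trans hyp2 hDyp) (neg_nonpos.mpr hb)
      have hprodpos : (0:ℝ) < 2 * p * (z ↑k).im * Real.cosh A := by positivity
      have h2 : DD ^ (-(α * θ)) ≤ (2 * p * (z ↑k).im * Real.cosh A) ^ (-(α * θ / 2)) := by
        have heq2 : DD ^ (-(α * θ)) = (DD ^ 2) ^ (-(α * θ / 2)) := by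
          rw [← Real.rpow_natCast DD 2, ← Real.rpow_mul hDnn]
          congr 1
          push_cast
          ring
        rw [heq2]
        exact BT.rpow_anti hprodpos hcosh (neg_nonpos.mpr he)
      have hφeq : φc (mK k) = ((2:ℝ) ^ (mK k : ℝ)) ^ c *
          (1 + (2:ℝ) ^ (mK k : ℝ)) ^ (-(α * (1 - θ))) := by
        simp only [hφcdef]
        rw [Real.rpow_mul (le_of_lt two_pos)]
      have hassem := BT.assemble1 c (α * (1 - θ)) (α * θ / 2) (β - α)
        ((2:ℝ) ^ (mK k : ℝ)) p (2 * Real.cosh A) ht hp (by positivity)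
        (by rw [hcdef]; ring)
      calc DD ^ (-α) * (z ↑k).im ^ β
          = DD ^ (-(α * (1 - θ))) * DD ^ (-(α * θ)) * (z ↑k).im ^ β := by rw [← hsplit]
        _ ≤ ((1 + (2:ℝ) ^ (mK k : ℝ)) * p) ^ (-(α * (1 - θ))) *
            (2 * p * (z ↑k).im * Real.cosh A) ^ (-(α * θ / 2)) * (z ↑k).im ^ β := by
            apply mul_le_mul_of_nonneg_right _ (Real.rpow_nonneg hyk.le β)
            exact mul_le_mul h1 h2 (Real.rpow_nonneg hDnn _) (Real.rpow_nonneg hypos.le _)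
        _ = ((1 + (2:ℝ) ^ (mK k : ℝ)) * p) ^ (-(α * (1 - θ))) *
            ((2 * Real.cosh A) * p) ^ (-(α * θ / 2)) *
            ((z ↑k).im ^ (-(α * θ / 2)) * (z ↑k).im ^ β) := by
            rw [show 2 * p * (z ↑k).im * Real.cosh A =
              ((2 * Real.cosh A) * p) * (z ↑k).im by ring,
              Real.mul_rpow (by positivity) hyk.le]
            ring
        _ = ((1 + (2:ℝ) ^ (mK k : ℝ)) * p) ^ (-(α * (1 - θ))) *
            ((2 * Real.cosh A) * p) ^ (-(α * θ / 2)) * (z ↑k).im ^ c := by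
            rw [← Real.rpow_add hyk]
            congr 2
            rw [hcdef]
            ring
        _ ≤ ((1 + (2:ℝ) ^ (mK k : ℝ)) * p) ^ (-(α * (1 - θ))) *
            ((2 * Real.cosh A) * p) ^ (-(α * θ / 2)) *
            ((2:ℝ) ^ (mK k : ℝ) * 2 * p) ^ c := by
            apply mul_le_mul_of_nonneg_left
              (Real.rpow_le_rpow hyk.le hsk.2.le hc0.le)
            exact mul_nonneg (Real.rpow_nonneg hypos.le _)
              (Real.rpow_nonneg (by positivity) _)
        _ = Kc * φc (mK k) * w1 (nK k) := by
            rw [hw1v, mul_one, hKcdef, hφeq]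
            calc ((1 + (2:ℝ) ^ (mK k : ℝ)) * p) ^ (-(α * (1 - θ))) *
                ((2 * Real.cosh A) * p) ^ (-(α * θ / 2)) *
                ((2:ℝ) ^ (mK k : ℝ) * 2 * p) ^ c
                = ((2:ℝ) ^ (mK k : ℝ) * 2 * p) ^ c *
                  ((1 + (2:ℝ) ^ (mK k : ℝ)) * p) ^ (-(α * (1 - θ))) *
                  ((2 * Real.cosh A) * p) ^ (-(α * θ / 2)) := by ring
              _ = (2:ℝ) ^ c * p ^ (β - α) * (2 * Real.cosh A) ^ (-(α * θ / 2)) *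
                  (((2:ℝ) ^ (mK k : ℝ)) ^ c *
                    (1 + (2:ℝ) ^ (mK k : ℝ)) ^ (-(α * (1 - θ)))) := hassem
              _ = (2:ℝ) ^ c * p ^ (β - α) * (2 * Real.cosh A) ^ (-(α * θ / 2)) *
                  (((2:ℝ) ^ (mK k : ℝ)) ^ c *
                    (1 + (2:ℝ) ^ (mK k : ℝ)) ^ (-(α * (1 - θ)))) := by ring
        _ ≤ G (mK k, nK k) := by
            rw [hGdef]
            exact le_add_of_nonneg_right
              (mul_nonneg (mul_nonneg hKp0 (hφ10 _)) (hw20 _))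
    · -- far points
      push_neg at hn1
      have hN2 : 2 ≤ (nK k).natAbs := hn1
      have hNge : (2:ℝ) ≤ ((nK k).natAbs : ℝ) := by exact_mod_cast hN2
      have hN0 : (0:ℝ) < ((nK k).natAbs : ℝ) := by linarith
      have hs : (0:ℝ) < (2:ℝ) ^ (mK k : ℝ) * p * E / 4 := hsm0 (mK k)
      have habs : ((nK k).natAbs : ℝ) / 2 * ((2:ℝ) ^ (mK k : ℝ) * p * E / 4) ≤
          |(z ↑k).re - (z j).re| := by
        rcases le_or_gt 0 (nK k) with hsign | hsign
        · have hcast' : ((nK k).natAbs : ℝ) = ((nK k : ℤ) : ℝ) := by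
            rw [Nat.cast_natAbs]
            exact_mod_cast abs_of_nonneg hsign
          have h1 := hik.1
          calc ((nK k).natAbs : ℝ) / 2 * ((2:ℝ) ^ (mK k : ℝ) * p * E / 4)
              ≤ ((nK k).natAbs : ℝ) * ((2:ℝ) ^ (mK k : ℝ) * p * E / 4) := by
                nlinarith only [hs, hNge]
            _ = ((nK k : ℤ) : ℝ) * ((2:ℝ) ^ (mK k : ℝ) * p * E / 4) := by rw [hcast']
            _ ≤ (z ↑k).re - (z j).re := h1
            _ ≤ |(z ↑k).re - (z j).re| := le_abs_self _
        · have hcast' : ((nK k).natAbs : ℝ) = -((nK k : ℤ) : ℝ) := by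
            rw [Nat.cast_natAbs]
            exact_mod_cast abs_of_nonpos hsign.le
          have h2 := hik.2
          have h2le : nK k ≤ -2 := by omega
          have h2le' : ((nK k : ℤ) : ℝ) ≤ -2 := by exact_mod_cast h2le
          have hnk1 : ((nK k : ℤ) : ℝ) + 1 ≤ -(((nK k).natAbs : ℝ) / 2) := by
            rw [hcast']
            linarith only [h2le']
          have hstep : (z ↑k).re - (z j).re < -(((nK k).natAbs : ℝ) / 2) *
              ((2:ℝ) ^ (mK k : ℝ) * p * E / 4) := by
            calc (z ↑k).re - (z j).re
                < (((nK k : ℤ) : ℝ) + 1) * ((2:ℝ) ^ (mK k : ℝ) * p * E / 4) := h2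
              _ ≤ -(((nK k).natAbs : ℝ) / 2) * ((2:ℝ) ^ (mK k : ℝ) * p * E / 4) :=
                  mul_le_mul_of_nonneg_right hnk1 hs.le
          calc ((nK k).natAbs : ℝ) / 2 * ((2:ℝ) ^ (mK k : ℝ) * p * E / 4)
              ≤ -((z ↑k).re - (z j).re) := by linarith only [hstep]
            _ ≤ |(z ↑k).re - (z j).re| := neg_le_abs _
      have habs0 : (0:ℝ) < ((nK k).natAbs : ℝ) / 2 * ((2:ℝ) ^ (mK k : ℝ) * p * E / 4) := by
        positivity
      have hDabs : |(z ↑k).re - (z j).re| ≤ DD := by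
        nlinarith only [hD2, hD0, abs_nonneg ((z ↑k).re - (z j).re),
          sq_abs ((z ↑k).re - (z j).re), sq_nonneg ((z ↑k).im + p), hyk, hp]
      have hsplit : DD ^ (-α) = DD ^ (-γ) * DD ^ (-(α - γ)) := by
        rw [← Real.rpow_add hD0]
        congr 1
        ring
      have h1 : DD ^ (-γ) ≤
          (((nK k).natAbs : ℝ) / 2 * ((2:ℝ) ^ (mK k : ℝ) * p * E / 4)) ^ (-γ) :=
        BT.rpow_anti habs0 (le_trans habs hDabs) (neg_nonpos.mpr (by linarith))
      have h2 : DD ^ (-(α - γ)) ≤ ((1 + (2:ℝ) ^ (mK k : ℝ)) * p) ^ (-(α - γ)) :=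
        BT.rpow_anti hypos (le_trans hyp2 hDyp) (neg_nonpos.mpr (by linarith))
      have hφeq : φ1 (mK k) = ((2:ℝ) ^ (mK k : ℝ)) ^ (β - γ) *
          (1 + (2:ℝ) ^ (mK k : ℝ)) ^ (-(α - γ)) := by
        simp only [hφ1def]
        rw [Real.rpow_mul (le_of_lt two_pos)]
      have hw2v : w2 (nK k) = ((nK k).natAbs : ℝ) ^ (-γ) := by simp only [hw2def]
      have hassem := BT.assemble2 α β γ ((2:ℝ) ^ (mK k : ℝ)) p E ((nK k).natAbs : ℝ)
        ht hp hE0 hN0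
      calc DD ^ (-α) * (z ↑k).im ^ β
          = DD ^ (-γ) * DD ^ (-(α - γ)) * (z ↑k).im ^ β := by rw [← hsplit]
        _ ≤ (((nK k).natAbs : ℝ) / 2 * ((2:ℝ) ^ (mK k : ℝ) * p * E / 4)) ^ (-γ) *
            ((1 + (2:ℝ) ^ (mK k : ℝ)) * p) ^ (-(α - γ)) *
            ((2:ℝ) ^ (mK k : ℝ) * 2 * p) ^ β := by
            apply mul_le_mul
            · exact mul_le_mul h1 h2 (Real.rpow_nonneg hDnn _)
                (Real.rpow_nonneg habs0.le _)
            · exact Real.rpow_le_rpow hyk.le hsk.2.le hβ0.le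
            · exact Real.rpow_nonneg hyk.le _
            · exact mul_nonneg (Real.rpow_nonneg habs0.le _)
                (Real.rpow_nonneg hypos.le _)
        _ = Kp * φ1 (mK k) * w2 (nK k) := by
            rw [hKpdef, hφeq, hw2v]
            calc (((nK k).natAbs : ℝ) / 2 * ((2:ℝ) ^ (mK k : ℝ) * p * E / 4)) ^ (-γ) *
                ((1 + (2:ℝ) ^ (mK k : ℝ)) * p) ^ (-(α - γ)) *
                ((2:ℝ) ^ (mK k : ℝ) * 2 * p) ^ β
                = ((2:ℝ) ^ (mK k : ℝ) * 2 * p) ^ β *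
                  (((nK k).natAbs : ℝ) / 2 * ((2:ℝ) ^ (mK k : ℝ) * p * E / 4)) ^ (-γ) *
                  ((1 + (2:ℝ) ^ (mK k : ℝ)) * p) ^ (-(α - γ)) := by ring
              _ = (2:ℝ) ^ γ * ((2:ℝ) ^ β * (4:ℝ) ^ γ * E ^ (-γ) * p ^ (β - α)) *
                  (((2:ℝ) ^ (mK k : ℝ)) ^ (β - γ) *
                    (1 + (2:ℝ) ^ (mK k : ℝ)) ^ (-(α - γ))) *
                  ((nK k).natAbs : ℝ) ^ (-γ) := hassem
        _ ≤ G (mK k, nK k) := by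
            rw [hGdef]
            exact le_add_of_nonneg_left
              (mul_nonneg (mul_nonneg hKc0 (hφc0 _)) (hw10 _))
  have hcomp : Summable (fun k : {k : ℕ // k ≠ j} => G (mK k, nK k)) :=
    hGsum.comp_injective haddr
  have hFsum : Summable (fun k : {k : ℕ // k ≠ j} =>
      ‖(z k : ℂ) - (starRingEnd ℂ) ((z j : ℂ))‖ ^ (-α) * (z k).im ^ β) := by
    apply Summable.of_nonneg_of_le _ hpoint hcomp
    intro k
    have h1 : (0:ℝ) ≤ ‖(z k : ℂ) - (starRingEnd ℂ) ((z j : ℂ))‖ ^ (-α) :=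
      Real.rpow_nonneg (norm_nonneg _) _
    have h2 : (0:ℝ) ≤ (z k).im ^ β := Real.rpow_nonneg (z (k:ℕ)).im_pos.le _
    exact mul_nonneg h1 h2
  refine ⟨hFsum, ?_⟩
  have step1 : (∑' k : {k : ℕ // k ≠ j},
      ‖(z k : ℂ) - (starRingEnd ℂ) ((z j : ℂ))‖ ^ (-α) * (z k).im ^ β) ≤ ∑' q, G q :=
    Summable.tsum_le_tsum_of_inj _ haddr (fun q _ => hG0 q) hpoint hFsum hGsum
  have step2 : (∑' q, G q) ≤ ε * p ^ (β - α) := by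
    have hδ1 : δ ≤ α * θ / 2 := hδdef ▸ min_le_left _ _
    have hδ2 : δ ≤ γ / 2 := hδdef ▸ min_le_right _ _
    have h6 : (2 * Real.cosh A) ^ (-(α * θ / 2)) ≤ Real.exp (-(δ * A)) := by
      have hcA : Real.exp A ≤ 2 * Real.cosh A := by
        rw [Real.cosh_eq]
        have := Real.exp_pos (-A)
        nlinarith
      calc (2 * Real.cosh A) ^ (-(α * θ / 2)) ≤ (Real.exp A) ^ (-(α * θ / 2)) :=
            BT.rpow_anti (Real.exp_pos A) hcA (neg_nonpos.mpr (by positivity))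
        _ = Real.exp (A * (-(α * θ / 2))) := (Real.exp_mul A _).symm
        _ ≤ Real.exp (-(δ * A)) := by
            apply Real.exp_le_exp.mpr
            nlinarith [hA0.le]
    have h7 : E ^ (-γ) ≤ Real.exp (-(δ * A)) := by
      rw [hEdef]
      calc (Real.exp (A / 2)) ^ (-γ) = Real.exp ((A / 2) * (-γ)) := (Real.exp_mul _ _).symm
        _ ≤ Real.exp (-(δ * A)) := by
            apply Real.exp_le_exp.mpr
            nlinarith [hA0.le]
    have hv1 : ∑' q : ℤ × ℤ, Kc * φc q.1 * w1 q.2 = Kc * Cc * W1 := by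
      rw [BT.tsum_prod_mul (hφc.mul_left Kc) hw1
        (fun m => mul_nonneg hKc0 (hφc0 m)) hw10, tsum_mul_left, ← hCcdef, ← hW1def]
    have hv2 : ∑' q : ℤ × ℤ, Kp * φ1 q.1 * w2 q.2 = Kp * C1 * W2 := by
      rw [BT.tsum_prod_mul (hφ1.mul_left Kp) hw2
        (fun m => mul_nonneg hKp0 (hφ10 m)) hw20, tsum_mul_left, ← hC1def, ← hW2def]
    have hb1 : Kc * Cc * W1 ≤ (2:ℝ) ^ c * Cc * W1 * Real.exp (-(δ * A)) * p ^ (β - α) := by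
      have h0 : (0:ℝ) ≤ (2:ℝ) ^ c * Cc * W1 * p ^ (β - α) := by
        have h1 : (0:ℝ) ≤ p ^ (β - α) := Real.rpow_nonneg hp.le _
        positivity
      calc Kc * Cc * W1
          = ((2:ℝ) ^ c * Cc * W1 * p ^ (β - α)) * (2 * Real.cosh A) ^ (-(α * θ / 2)) := by
            rw [hKcdef]; ring
        _ ≤ ((2:ℝ) ^ c * Cc * W1 * p ^ (β - α)) * Real.exp (-(δ * A)) :=
            mul_le_mul_of_nonneg_left h6 h0
        _ = (2:ℝ) ^ c * Cc * W1 * Real.exp (-(δ * A)) * p ^ (β - α) := by ring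
    have hb2 : Kp * C1 * W2 ≤
        (2:ℝ) ^ γ * ((2:ℝ) ^ β * (4:ℝ) ^ γ) * C1 * W2 * Real.exp (-(δ * A)) * p ^ (β - α) := by
      have h0 : (0:ℝ) ≤ (2:ℝ) ^ γ * ((2:ℝ) ^ β * (4:ℝ) ^ γ) * C1 * W2 * p ^ (β - α) := by
        have h1 : (0:ℝ) ≤ p ^ (β - α) := Real.rpow_nonneg hp.le _
        positivity
      calc Kp * C1 * W2
          = ((2:ℝ) ^ γ * ((2:ℝ) ^ β * (4:ℝ) ^ γ) * C1 * W2 * p ^ (β - α)) * E ^ (-γ) := by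
            rw [hKpdef]; ring
        _ ≤ ((2:ℝ) ^ γ * ((2:ℝ) ^ β * (4:ℝ) ^ γ) * C1 * W2 * p ^ (β - α)) *
              Real.exp (-(δ * A)) := mul_le_mul_of_nonneg_left h7 h0
        _ = (2:ℝ) ^ γ * ((2:ℝ) ^ β * (4:ℝ) ^ γ) * C1 * W2 * Real.exp (-(δ * A)) *
              p ^ (β - α) := by ring
    calc (∑' q, G q) = Kc * Cc * W1 + Kp * C1 * W2 := by
          rw [hGdef, Summable.tsum_add hs1 hs2, hv1, hv2]
      _ ≤ (2:ℝ) ^ c * Cc * W1 * Real.exp (-(δ * A)) * p ^ (β - α)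
          + (2:ℝ) ^ γ * ((2:ℝ) ^ β * (4:ℝ) ^ γ) * C1 * W2 * Real.exp (-(δ * A)) *
            p ^ (β - α) := add_le_add hb1 hb2
      _ = (K * Real.exp (-(δ * A))) * p ^ (β - α) := by rw [hKdef]; ring
      _ ≤ ε * p ^ (β - α) :=
          mul_le_mul_of_nonneg_right hKe (Real.rpow_nonneg hp.le _)
  rw [← hpdef]
  exact le_trans step1 step2
end
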